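/- There exists a code C ⊆ {0,1}^6 with |C| = 12 and d_Z(a,b) ≥ 2 for all distinct a, b ∈ C having exactly 16 free points, and every code C ⊆ {0,1}^6 with |C| = 12 and d_Z(a,b) ≥ 2 for all distinct a, b ∈ C has at most 16 free points. -/
import Mathlib


/-- Hamming weight of a binary word: the number of ones. -/
def wt {n : ℕ} (a : Fin n → Bool) : ℕ :=
  (Finset.univ.filter (fun i => a i = true)).card

/-- N(a,b) = number of positions where a is 0 and b is 1. -/
def NN {n : ℕ} (a b : Fin n → Bool) : ℕ :=
  (Finset.univ.filter (fun i => a i = false ∧ b i = true)).card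

/-- The Z-distance d_Z(a,b) = max(N(a,b), N(b,a)). -/
def dZ {n : ℕ} (a b : Fin n → Bool) : ℕ := max (NN a b) (NN b a)

/-- A code correcting one asymmetric error: d_Z(a,b) ≥ 2 for distinct codewords. -/
def IsZCode {n : ℕ} (C : Finset (Fin n → Bool)) : Prop :=
  ∀ a ∈ C, ∀ b ∈ C, a ≠ b → 2 ≤ dZ a b

/-- The output ball B_1(a): words obtainable from a by at most one asymmetric (1→0) error. -/
def ball {n : ℕ} (a : Fin n → Bool) : Finset (Fin n → Bool) :=
  Finset.univ.filter (fun y => (∀ i, y i ≤ a i) ∧ wt a - wt y ≤ 1)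

/-- The number of free points of a code: words lying in no ball B_1(a), a ∈ C. -/
def freeCount {n : ℕ} (C : Finset (Fin n → Bool)) : ℕ :=
  (Finset.univ.filter (fun y => ∀ a ∈ C, y ∉ ball a)).card

/-- A two-stage coding algorithm (c1, c2, dec) of lengths n1, n2 with message set `Fin M`
is successful if it correctly decodes under at most one asymmetric error in total. -/
def TwoStageSuccess (n1 n2 M : ℕ)
    (c1 : Fin M → (Fin n1 → Bool))
    (c2 : Fin M → (Fin n1 → Bool) → (Fin n2 → Bool))
    (dec : (Fin n1 → Bool) → (Fin n2 → Bool) → Fin M) : Prop :=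
  ∀ (m : Fin M) (y1 : Fin n1 → Bool) (y2 : Fin n2 → Bool),
    (∀ i, y1 i ≤ c1 m i) → (∀ i, y2 i ≤ c2 m y1 i) →
    (wt (c1 m) - wt y1) + (wt (c2 m y1) - wt y2) ≤ 1 →
    dec y1 y2 = m

-- support
def supp {n : ℕ} (a : Fin n → Bool) : Finset (Fin n) :=
  Finset.univ.filter (fun i => a i = true)

lemma mem_supp {n : ℕ} (a : Fin n → Bool) (i : Fin n) : i ∈ supp a ↔ a i = true := by
  simp [supp]

lemma wt_eq {n : ℕ} (a : Fin n → Bool) : wt a = (supp a).card := rfl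

lemma supp_inj {n : ℕ} : Function.Injective (supp (n := n)) := by
  intro a b h
  funext i
  have := congrArg (i ∈ ·) h
  simp [mem_supp] at this
  cases ha : a i <;> cases hb : b i <;> simp_all

lemma NN_eq {n : ℕ} (a b : Fin n → Bool) : NN a b = (supp b \ supp a).card := by
  unfold NN
  congr 1
  ext i
  simp [supp]
  cases a i <;> simp

lemma wt_le {n : ℕ} (a : Fin n → Bool) : wt a ≤ n := by
  simpa [wt_eq] using Finset.card_le_card (Finset.subset_univ (supp a))

lemma supp_subset_of_le {n : ℕ} {y a : Fin n → Bool} (h : ∀ i, y i ≤ a i) :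
    supp y ⊆ supp a := by
  intro i hi
  rw [mem_supp] at *
  have := h i
  rw [hi] at this
  exact (Bool.le_iff_imp.mp this) rfl

lemma card_sdiff_supp {n : ℕ} {y a : Fin n → Bool} (h : ∀ i, y i ≤ a i) :
    (supp a \ supp y).card = wt a - wt y := by
  rw [Finset.card_sdiff_of_subset (supp_subset_of_le h), wt_eq, wt_eq]

lemma mem_ball {n : ℕ} (a y : Fin n → Bool) :
    y ∈ ball a ↔ (∀ i, y i ≤ a i) ∧ wt a - wt y ≤ 1 := by
  simp [ball]

lemma myBall_eq {n : ℕ} (a : Fin n → Bool) :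
    ball a = insert a ((supp a).image (fun i => Function.update a i false)) := by
  ext y
  rw [mem_ball]
  constructor
  · rintro ⟨hle, hwt⟩
    have hsub := supp_subset_of_le hle
    have hcard : (supp a \ supp y).card ≤ 1 := by
      rw [card_sdiff_supp hle]; exact hwt
    rw [Finset.mem_insert]
    rcases Nat.le_one_iff_eq_zero_or_eq_one.mp hcard with h0 | h1
    · left
      apply supp_inj
      have h2 : supp a ⊆ supp y :=
        Finset.sdiff_eq_empty_iff_subset.mp (Finset.card_eq_zero.mp h0)
      exact (Finset.Subset.antisymm h2 hsub).symm
    · obtain ⟨i, hi⟩ := Finset.card_eq_one.mp h1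
      right
      rw [Finset.mem_image]
      have hia : i ∈ supp a := by
        have : i ∈ supp a \ supp y := hi ▸ Finset.mem_singleton_self i
        exact (Finset.mem_sdiff.mp this).1
      refine ⟨i, hia, ?_⟩
      funext j
      by_cases hji : j = i
      · subst hji
        have hmem : j ∈ supp a \ supp y := hi ▸ Finset.mem_singleton_self j
        have hjy : j ∉ supp y := (Finset.mem_sdiff.mp hmem).2
        rw [mem_supp] at hjy
        simp [Function.update]
        cases hy : y j
        · rfl
        · exact absurd hy hjy
      · simp [Function.update, hji]
        by_cases hja : j ∈ supp a
        · have hjd : j ∉ supp a \ supp y := by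
            rw [hi]; simp [hji]
          have hjy : j ∈ supp y := by
            by_contra hc
            exact hjd (Finset.mem_sdiff.mpr ⟨hja, hc⟩)
          rw [mem_supp] at hja hjy
          rw [hjy, hja]
        · rw [mem_supp] at hja
          have := hle j
          cases hy : y j
          · cases hA : a j
            · rfl
            · exact absurd hA hja
          · rw [hy] at this
            cases hA : a j
            · rw [hA] at this; exact absurd this (by simp)
            · exact absurd hA hja
  · intro h
    rcases Finset.mem_insert.mp h with rfl | h
    · exact ⟨fun i => le_refl _, by simp⟩
    · obtain ⟨i, hi, rfl⟩ := Finset.mem_image.mp h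
      rw [mem_supp] at hi
      constructor
      · intro j
        by_cases hji : j = i <;> simp [Function.update, hji]
      · have hs : supp (Function.update a i false) = (supp a).erase i := by
          ext j
          by_cases hji : j = i <;> simp [mem_supp, Function.update, hji, hi]
        rw [wt_eq, wt_eq, hs, Finset.card_erase_of_mem (by rw [mem_supp]; exact hi)]
        omega

lemma ball_card {n : ℕ} (a : Fin n → Bool) : (ball a).card = wt a + 1 := by
  have hinj : Set.InjOn (fun i => Function.update a i false) (supp a) := by
    intro i hi j hj hij
    by_contra hne
    have h2 := congrFun hij i
    simp only [Finset.mem_coe, mem_supp] at hi hj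
    simp [Function.update, hne] at h2
    rw [hi] at h2
    exact Bool.false_ne_true h2.symm
  have hnot : a ∉ (supp a).image (fun i => Function.update a i false) := by
    rw [Finset.mem_image]
    rintro ⟨i, hi, hupd⟩
    have h2 := congrFun hupd i
    rw [mem_supp] at hi
    simp [Function.update] at h2
    rw [hi] at h2
    exact absurd h2.symm Bool.false_ne_true
  rw [myBall_eq, Finset.card_insert_of_notMem hnot, Finset.card_image_of_injOn hinj, wt_eq]

lemma balls_disjoint {n : ℕ} {a b : Fin n → Bool} (hne : a ≠ b) (hd : 2 ≤ dZ a b) :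
    Disjoint (ball a) (ball b) := by
  rw [Finset.disjoint_left]
  intro y hya hyb
  rw [mem_ball] at hya hyb
  obtain ⟨hlea, hwa⟩ := hya
  obtain ⟨hleb, hwb⟩ := hyb
  have h1 : NN a b ≤ 1 := by
    rw [NN_eq]
    calc (supp b \ supp a).card ≤ (supp b \ supp y).card := by
          apply Finset.card_le_card
          intro i hi
          rw [Finset.mem_sdiff] at *
          exact ⟨hi.1, fun hc => hi.2 (supp_subset_of_le hlea hc)⟩
      _ = wt b - wt y := card_sdiff_supp hleb
      _ ≤ 1 := hwb
  have h2 : NN b a ≤ 1 := by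
    rw [NN_eq]
    calc (supp a \ supp b).card ≤ (supp a \ supp y).card := by
          apply Finset.card_le_card
          intro i hi
          rw [Finset.mem_sdiff] at *
          exact ⟨hi.1, fun hc => hi.2 (supp_subset_of_le hleb hc)⟩
      _ = wt a - wt y := card_sdiff_supp hlea
      _ ≤ 1 := hwa
  unfold dZ at hd
  omega

lemma free_identity {n : ℕ} (C : Finset (Fin n → Bool)) (h : IsZCode C) :
    freeCount C + ∑ a ∈ C, (wt a + 1) = 2 ^ n := by
  classical
  have hdisj : ∀ a ∈ C, ∀ b ∈ C, a ≠ b → Disjoint (ball a) (ball b) := by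
    intro a ha b hb hne
    exact balls_disjoint hne (h a ha b hb hne)
  have hcover : (C.biUnion ball).card = ∑ a ∈ C, (wt a + 1) := by
    rw [Finset.card_biUnion hdisj]
    exact Finset.sum_congr rfl (fun a _ => ball_card a)
  have hsplit : (Finset.univ.filter (fun y => ∀ a ∈ C, y ∉ ball a)).card
      + (Finset.univ.filter (fun y => ¬ ∀ a ∈ C, y ∉ ball a)).card
      = (Finset.univ : Finset (Fin n → Bool)).card :=
    Finset.card_filter_add_card_filter_not _
  have hneg : Finset.univ.filter (fun y => ¬ ∀ a ∈ C, y ∉ ball a) = C.biUnion ball := by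
    ext y
    simp [Finset.mem_biUnion]
  have huniv : (Finset.univ : Finset (Fin n → Bool)).card = 2 ^ n := by
    simp [Finset.card_univ]
  rw [hneg, hcover] at hsplit
  rw [huniv] at hsplit
  exact hsplit

lemma dZ_branch {n : ℕ} {a b : Fin n → Bool} (h : 2 ≤ dZ a b) :
    2 ≤ (supp b \ supp a).card ∨ 2 ≤ (supp a \ supp b).card := by
  unfold dZ at h
  rw [NN_eq, NN_eq] at h
  omega

lemma disj_of_sdiff {n : ℕ} {a b : Fin n → Bool} (h : wt b ≤ (supp b \ supp a).card) :
    Disjoint (supp a) (supp b) := by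
  have hsub : supp b \ supp a ⊆ supp b := Finset.sdiff_subset
  have heq : supp b \ supp a = supp b := Finset.eq_of_subset_of_card_le hsub h
  exact (Finset.sdiff_eq_self_iff_disjoint.mp heq).symm

lemma pack2 {n : ℕ} (F : Finset (Finset (Fin n))) (s : Finset (Fin n))
    (hcard : ∀ t ∈ F, t.card = 2) (hsub : ∀ t ∈ F, t ⊆ s)
    (hdisj : ∀ t1 ∈ F, ∀ t2 ∈ F, t1 ≠ t2 → Disjoint t1 t2) :
    2 * F.card ≤ s.card := by
  have h1 : (F.biUnion id).card = ∑ t ∈ F, t.card := Finset.card_biUnion hdisj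
  have h2 : ∑ t ∈ F, t.card = 2 * F.card := by
    rw [Finset.sum_congr rfl hcard, Finset.sum_const, smul_eq_mul, Nat.mul_comm]
  have h3 : F.biUnion id ⊆ s := by
    intro x hx
    rw [Finset.mem_biUnion] at hx
    obtain ⟨t, ht, hxt⟩ := hx
    exact hsub t ht hxt
  calc 2 * F.card = (F.biUnion id).card := by rw [h1, h2]
    _ ≤ s.card := Finset.card_le_card h3

section Caps
variable {C : Finset (Fin 6 → Bool)} (hZ : IsZCode C)

lemma cap01 (hZ : IsZCode C) :
    (C.filter (fun a => wt a = 0)).card + (C.filter (fun a => wt a = 1)).card ≤ 1 := by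
  classical
  have hle : (C.filter (fun a => wt a ≤ 1)).card ≤ 1 := by
    rw [Finset.card_le_one]
    intro a ha b hb
    rw [Finset.mem_filter] at ha hb
    by_contra hne
    have hd := hZ a ha.1 b hb.1 hne
    rcases dZ_branch hd with h | h
    · have : (supp b \ supp a).card ≤ wt b := by
        rw [wt_eq]; exact Finset.card_le_card Finset.sdiff_subset
      omega
    · have : (supp a \ supp b).card ≤ wt a := by
        rw [wt_eq]; exact Finset.card_le_card Finset.sdiff_subset
      omega
  have hunion : (C.filter (fun a => wt a = 0)) ∪ (C.filter (fun a => wt a = 1))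
      ⊆ C.filter (fun a => wt a ≤ 1) := by
    intro a ha
    rw [Finset.mem_union, Finset.mem_filter, Finset.mem_filter] at ha
    rw [Finset.mem_filter]
    rcases ha with h | h
    · exact ⟨h.1, by omega⟩
    · exact ⟨h.1, by omega⟩
  have hdisj : Disjoint (C.filter (fun a => wt a = 0)) (C.filter (fun a => wt a = 1)) := by
    rw [Finset.disjoint_left]
    intro a ha hb
    rw [Finset.mem_filter] at ha hb
    omega
  rw [← Finset.card_union_of_disjoint hdisj]
  exact le_trans (Finset.card_le_card hunion) hle

lemma supp2_disjoint (hZ : IsZCode C) :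
    ∀ a ∈ C.filter (fun a => wt a = 2), ∀ b ∈ C.filter (fun a => wt a = 2),
      a ≠ b → Disjoint (supp a) (supp b) := by
  intro a ha b hb hne
  rw [Finset.mem_filter] at ha hb
  have hd := hZ a ha.1 b hb.1 hne
  rcases dZ_branch hd with h | h
  · exact disj_of_sdiff (by omega)
  · exact (disj_of_sdiff (by omega)).symm

lemma cap2 (hZ : IsZCode C) : (C.filter (fun a => wt a = 2)).card ≤ 3 := by
  classical
  set S := C.filter (fun a => wt a = 2) with hS
  set T := S.image supp with hT
  have hTcard : T.card = S.card := Finset.card_image_of_injective _ supp_inj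
  have h := pack2 T Finset.univ
    (fun t ht => by
      obtain ⟨a, ha, rfl⟩ := Finset.mem_image.mp ht
      rw [hS, Finset.mem_filter] at ha
      rw [← wt_eq]; exact ha.2)
    (fun t _ => Finset.subset_univ t)
    (fun t1 ht1 t2 ht2 hne => by
      obtain ⟨a, ha, rfl⟩ := Finset.mem_image.mp ht1
      obtain ⟨b, hb, rfl⟩ := Finset.mem_image.mp ht2
      exact supp2_disjoint hZ a ha b hb (fun hc => hne (by rw [hc])))
  simp only [Finset.card_univ, Fintype.card_fin] at h
  omega

lemma cap12 (hZ : IsZCode C) (hx : ∃ x ∈ C, wt x = 1) :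
    (C.filter (fun a => wt a = 2)).card ≤ 2 := by
  classical
  obtain ⟨x, hxC, hwx⟩ := hx
  obtain ⟨p, hp⟩ := Finset.card_eq_one.mp (by rw [← wt_eq]; exact hwx)
  set S := C.filter (fun a => wt a = 2) with hS
  set T := S.image supp with hT
  have hTcard : T.card = S.card := Finset.card_image_of_injective _ supp_inj
  have havoid : ∀ a ∈ S, p ∉ supp a := by
    intro a ha
    rw [hS, Finset.mem_filter] at ha
    have hne : x ≠ a := by
      intro hc; rw [hc] at hwx; omega
    have hd := hZ x hxC a ha.1 hne
    have hdisj : Disjoint (supp x) (supp a) := by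
      have hw2 : wt a = 2 := ha.2
      rcases dZ_branch hd with h | h
      · exact disj_of_sdiff (by omega)
      · have hle : (supp x \ supp a).card ≤ wt x := by
          rw [wt_eq]; exact Finset.card_le_card Finset.sdiff_subset
        exact absurd h (by omega)
    intro hpa
    have hpx : p ∈ supp x := by rw [hp]; exact Finset.mem_singleton_self p
    exact Finset.disjoint_left.mp hdisj hpx hpa
  have h := pack2 T (Finset.univ.erase p)
    (fun t ht => by
      obtain ⟨a, ha, rfl⟩ := Finset.mem_image.mp ht
      have := ha
      rw [hS, Finset.mem_filter] at this
      rw [← wt_eq]; exact this.2)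
    (fun t ht => by
      obtain ⟨a, ha, rfl⟩ := Finset.mem_image.mp ht
      intro i hi
      rw [Finset.mem_erase]
      exact ⟨fun hc => havoid a ha (hc ▸ hi), Finset.mem_univ i⟩)
    (fun t1 ht1 t2 ht2 hne => by
      obtain ⟨a, ha, rfl⟩ := Finset.mem_image.mp ht1
      obtain ⟨b, hb, rfl⟩ := Finset.mem_image.mp ht2
      exact supp2_disjoint hZ a ha b hb (fun hc => hne (by rw [hc])))
  have : (Finset.univ.erase p).card = 5 := by
    rw [Finset.card_erase_of_mem (Finset.mem_univ p)]
    simp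
  omega

lemma cap3 (hZ : IsZCode C) : (C.filter (fun a => wt a = 3)).card ≤ 4 := by
  classical
  set S := C.filter (fun a => wt a = 3) with hS
  set T := S.image supp with hT
  have hTcard : T.card = S.card := Finset.card_image_of_injective _ supp_inj
  have hT3 : ∀ t ∈ T, t.card = 3 := by
    intro t ht
    obtain ⟨a, ha, rfl⟩ := Finset.mem_image.mp ht
    rw [hS, Finset.mem_filter] at ha
    rw [← wt_eq]; exact ha.2
  have hTint : ∀ t1 ∈ T, ∀ t2 ∈ T, t1 ≠ t2 → (t1 ∩ t2).card ≤ 1 := by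
    intro t1 ht1 t2 ht2 hne
    obtain ⟨a, ha, rfl⟩ := Finset.mem_image.mp ht1
    obtain ⟨b, hb, rfl⟩ := Finset.mem_image.mp ht2
    rw [hS, Finset.mem_filter] at ha hb
    have hab : a ≠ b := fun hc => hne (by rw [hc])
    have hd := hZ a ha.1 b hb.1 hab
    have e1 : (supp b \ supp a).card + (supp b ∩ supp a).card = wt b := by
      rw [wt_eq]; exact Finset.card_sdiff_add_card_inter _ _
    have e2 : (supp a \ supp b).card + (supp a ∩ supp b).card = wt a := by
      rw [wt_eq]; exact Finset.card_sdiff_add_card_inter _ _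
    have e3 : (supp b ∩ supp a).card = (supp a ∩ supp b).card := by
      rw [Finset.inter_comm]
    have hw1 : wt a = 3 := ha.2
    have hw2 : wt b = 3 := hb.2
    rcases dZ_branch hd with h | h <;> omega
  -- degree bound: each point lies in at most 2 triples
  have hdeg : ∀ p : Fin 6, (T.filter (fun t => p ∈ t)).card ≤ 2 := by
    intro p
    set Tp := T.filter (fun t => p ∈ t) with hTp
    set F := Tp.image (fun t => t.erase p) with hF
    have hinj : Set.InjOn (fun t : Finset (Fin 6) => t.erase p) (Tp : Set (Finset (Fin 6))) := by
      intro t1 h1 t2 h2 he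
      rw [Finset.mem_coe, hTp, Finset.mem_filter] at h1 h2
      have : insert p (t1.erase p) = insert p (t2.erase p) := by
        simp only [] at he; rw [he]
      rwa [Finset.insert_erase h1.2, Finset.insert_erase h2.2] at this
    have hFcard : F.card = Tp.card := Finset.card_image_of_injOn hinj
    have h := pack2 F (Finset.univ.erase p)
      (fun t ht => by
        obtain ⟨u, hu, rfl⟩ := Finset.mem_image.mp ht
        rw [hTp, Finset.mem_filter] at hu
        rw [Finset.card_erase_of_mem hu.2, hT3 u hu.1])
      (fun t ht => by
        obtain ⟨u, hu, rfl⟩ := Finset.mem_image.mp ht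
        intro i hi
        rw [Finset.mem_erase] at hi ⊢
        exact ⟨hi.1, Finset.mem_univ i⟩)
      (fun t1 ht1 t2 ht2 hne => by
        obtain ⟨u1, hu1, rfl⟩ := Finset.mem_image.mp ht1
        obtain ⟨u2, hu2, rfl⟩ := Finset.mem_image.mp ht2
        rw [hTp, Finset.mem_filter] at hu1 hu2
        have hune : u1 ≠ u2 := fun hc => hne (by rw [hc])
        have hint := hTint u1 hu1.1 u2 hu2.1 hune
        rw [Finset.disjoint_left]
        intro x hx1 hx2
        rw [Finset.mem_erase] at hx1 hx2
        have hxp : x ∈ u1 ∩ u2 := Finset.mem_inter.mpr ⟨hx1.2, hx2.2⟩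
        have hpp : p ∈ u1 ∩ u2 := Finset.mem_inter.mpr ⟨hu1.2, hu2.2⟩
        have : ({x, p} : Finset (Fin 6)) ⊆ u1 ∩ u2 := by
          intro y hy
          rcases Finset.mem_insert.mp hy with rfl | hy
          · exact hxp
          · rw [Finset.mem_singleton.mp hy]; exact hpp
        have hc2 : ({x, p} : Finset (Fin 6)).card = 2 := by
          rw [Finset.card_insert_of_notMem (by simp [hx1.1]), Finset.card_singleton]
        have := Finset.card_le_card this
        omega)
    have : (Finset.univ.erase p).card = 5 := by
      rw [Finset.card_erase_of_mem (Finset.mem_univ p)]; simp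
    omega
  -- double counting
  have hcount : ∑ t ∈ T, t.card = ∑ p : Fin 6, (T.filter (fun t => p ∈ t)).card := by
    have h1 : ∀ t ∈ T, t.card = ∑ p : Fin 6, (if p ∈ t then 1 else 0) := by
      intro t _
      calc t.card = (Finset.univ.filter (fun p => p ∈ t)).card := by
            congr 1; ext p; simp
        _ = ∑ p : Fin 6, (if p ∈ t then 1 else 0) := Finset.card_filter _ _
    rw [Finset.sum_congr rfl h1, Finset.sum_comm]
    apply Finset.sum_congr rfl
    intro p _
    rw [Finset.card_filter]
  have hsum3 : ∑ t ∈ T, t.card = 3 * T.card := by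
    rw [Finset.sum_congr rfl hT3, Finset.sum_const, smul_eq_mul, Nat.mul_comm]
  have hub : ∑ p : Fin 6, (T.filter (fun t => p ∈ t)).card ≤ 12 := by
    calc ∑ p : Fin 6, (T.filter (fun t => p ∈ t)).card ≤ ∑ _p : Fin 6, 2 :=
          Finset.sum_le_sum (fun p _ => hdeg p)
      _ = 12 := by simp
  omega

end Caps

def cpl {n : ℕ} (a : Fin n → Bool) : Fin n → Bool := fun i => !(a i)

lemma cpl_inj {n : ℕ} : Function.Injective (cpl (n := n)) := by
  intro a b h
  funext i
  have := congrFun h i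
  simp [cpl] at this
  exact this

lemma supp_cpl {n : ℕ} (a : Fin n → Bool) : supp (cpl a) = (supp a)ᶜ := by
  ext i
  simp [mem_supp, cpl, Finset.mem_compl]

lemma wt_cpl {n : ℕ} (a : Fin n → Bool) : wt (cpl a) = n - wt a := by
  rw [wt_eq, supp_cpl, Finset.card_compl, wt_eq]
  simp

lemma NN_cpl {n : ℕ} (a b : Fin n → Bool) : NN (cpl a) (cpl b) = NN b a := by
  rw [NN_eq, NN_eq, supp_cpl, supp_cpl, compl_sdiff_compl]

lemma dZ_cpl {n : ℕ} (a b : Fin n → Bool) : dZ (cpl a) (cpl b) = dZ a b := by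
  unfold dZ
  rw [NN_cpl, NN_cpl, max_comm]

lemma isZCode_cpl {n : ℕ} {C : Finset (Fin n → Bool)} (hZ : IsZCode C) :
    IsZCode (C.image cpl) := by
  intro a ha b hb hne
  obtain ⟨x, hx, rfl⟩ := Finset.mem_image.mp ha
  obtain ⟨y, hy, rfl⟩ := Finset.mem_image.mp hb
  rw [dZ_cpl]
  exact hZ x hx y hy (fun hc => hne (by rw [hc]))

lemma fiber_cpl {C : Finset (Fin 6 → Bool)} (w : ℕ) (hw : w ≤ 6) :
    ((C.image cpl).filter (fun a => wt a = w)).card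
      = (C.filter (fun a => wt a = 6 - w)).card := by
  classical
  rw [Finset.filter_image]
  rw [Finset.card_image_of_injective _ cpl_inj]
  congr 1
  apply Finset.filter_congr
  intro a _
  have h1 : wt (cpl a) = 6 - wt a := wt_cpl a
  have h2 : wt a ≤ 6 := wt_le a
  constructor
  · intro h; simp only [h1] at h; omega
  · intro h; simp only [h1]; omega

lemma wt_sum_ge (C : Finset (Fin 6 → Bool)) (hZ : IsZCode C) (hcard : C.card = 12) :
    36 ≤ ∑ a ∈ C, wt a := by
  classical
  set A : ℕ → ℕ := fun w => (C.filter (fun a => wt a = w)).card with hA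
  have hmaps : ∀ a ∈ C, wt a ∈ Finset.range 7 := fun a _ =>
    Finset.mem_range.mpr (by have := wt_le a; omega)
  have hsumcard : ∑ w ∈ Finset.range 7, A w = 12 := by
    rw [hA, ← Finset.card_eq_sum_card_fiberwise hmaps, hcard]
  have hsumwt : ∑ a ∈ C, wt a = ∑ w ∈ Finset.range 7, w * A w := by
    rw [← Finset.sum_fiberwise_of_maps_to hmaps (fun a => wt a)]
    apply Finset.sum_congr rfl
    intro w _
    rw [Finset.sum_congr rfl (fun a ha => (Finset.mem_filter.mp ha).2),
      Finset.sum_const, smul_eq_mul, Nat.mul_comm]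
  -- caps
  have h01 : A 0 + A 1 ≤ 1 := cap01 hZ
  have h2 : A 2 ≤ 3 := cap2 hZ
  have h3 : A 3 ≤ 4 := cap3 hZ
  have h12 : 1 ≤ A 1 → A 2 ≤ 2 := by
    intro h
    apply cap12 hZ
    obtain ⟨x, hx⟩ := Finset.card_pos.mp (by omega : 0 < A 1)
    rw [Finset.mem_filter] at hx
    exact ⟨x, hx.1, hx.2⟩
  have hZ' : IsZCode (C.image cpl) := isZCode_cpl hZ
  have h4 : A 4 ≤ 3 := by
    have := cap2 hZ'
    rwa [fiber_cpl 2 (by omega)] at this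
  have h56 : A 6 + A 5 ≤ 1 := by
    have := cap01 hZ'
    rwa [fiber_cpl 0 (by omega), fiber_cpl 1 (by omega)] at this
  have h45 : 1 ≤ A 5 → A 4 ≤ 2 := by
    intro h
    have hx : ∃ x ∈ C.image cpl, wt x = 1 := by
      obtain ⟨x, hx⟩ := Finset.card_pos.mp (by omega : 0 < A 5)
      rw [Finset.mem_filter] at hx
      refine ⟨cpl x, Finset.mem_image_of_mem cpl hx.1, ?_⟩
      rw [wt_cpl, hx.2]
    have := cap12 hZ' hx
    rwa [fiber_cpl 2 (by omega)] at this
  simp only [Finset.sum_range_succ, Finset.sum_range_zero] at hsumcard hsumwt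
  rcases Nat.eq_zero_or_pos (A 1) with h1z | h1p
  · rcases Nat.eq_zero_or_pos (A 5) with h5z | h5p
    · omega
    · have := h45 h5p; omega
  · have := h12 h1p; omega

def myC : Finset (Fin 6 → Bool) :=
  { ![false,false,false,false,false,false],
    ![true,true,false,false,false,false],
    ![false,false,true,true,false,false],
    ![false,false,false,false,true,true],
    ![true,false,true,false,true,false],
    ![true,false,false,true,false,true],
    ![false,true,true,false,false,true],
    ![false,true,false,true,true,false],
    ![false,false,true,true,true,true],
    ![true,true,false,false,true,true],
    ![true,true,true,true,false,false],
    ![true,true,true,true,true,true] }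

set_option maxRecDepth 10000 in
theorem F_optimal_code_length_6 :
    (∃ C : Finset (Fin 6 → Bool), IsZCode C ∧ C.card = 12 ∧ freeCount C = 16) ∧
    (∀ C : Finset (Fin 6 → Bool), IsZCode C → C.card = 12 → freeCount C ≤ 16) := by
  constructor
  · exact ⟨myC, by unfold IsZCode; decide⟩
  · intro C hZ hcard
    have hid := free_identity C hZ
    have hsplit : ∑ a ∈ C, (wt a + 1) = (∑ a ∈ C, wt a) + 12 := by
      rw [Finset.sum_add_distrib, Finset.sum_const, hcard]
      simp
    have h36 := wt_sum_ge C hZ hcard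
    have hp : (2 : ℕ) ^ 6 = 64 := by norm_num
    omega
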